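/- Let z_x = γX + τ and z_y = γY + τ, where (X, Y) is bivariate normal with mean 0, unit variances, correlation ρ, and τ ~ Uniform(0, 2π) independent of (X, Y). Then the joint density of (z_x, z_y) is f(t_x, t_y) = (1/(2π)) φ_{√(2(1−ρ))γ}(t_x − t_y) [Φ((4π − (t_x + t_y))/(γ√(2(1+ρ)))) − Φ(−(t_x + t_y)/(γ√(2(1+ρ))))], where φ_σ is the N(0, σ²) density and Φ is the standard normal CDF. -/

import Mathlib

open MeasureTheory ProbabilityTheory Real Set

/-- The standard normal cumulative distribution function. -/
noncomputable def stdNormalCDF (t : ℝ) : ℝ :=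
  ∫ z in Set.Iic t, (Real.sqrt (2 * π))⁻¹ * Real.exp (-z ^ 2 / 2)

/-- The N(0, σ²) density. -/
noncomputable def gaussDensity (σ t : ℝ) : ℝ :=
  (Real.sqrt (2 * π) * σ)⁻¹ * Real.exp (-t ^ 2 / (2 * σ ^ 2))

/-- The uniform distribution on (0, 2π). -/
noncomputable def uniform02pi : Measure ℝ :=
  (ENNReal.ofReal (2 * π))⁻¹ • volume.restrict (Set.Ioo 0 (2 * π))

open scoped ENNReal

/-!
Write `(z_x, z_y) = W + (τ, τ)` with `W = (γX, ρ·γX + γ√(1-ρ²)Z)`. Shearing a pair of independent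
centred Gaussians shows that `W` has density `φ_γ(u) φ_{γ√(1-ρ²)}(v - ρu)`, and adding the
independent shift `(τ, τ)` averages this density over the translates by `(τ, τ)`. In the rotated
coordinates `u - v`, `u + v` the density of `W` factors as `2 φ_{σ₁}(u - v) φ_{σ₂}(u + v)` with
`σ₁ = √(2(1-ρ))γ`, `σ₂ = √(2(1+ρ))γ`; only the second factor sees `τ`, and averaging it over
`τ ∈ (0, 2π)` gives the difference of two values of `Φ`.
-/

namespace MeasureTheory.Measure

variable {α G : Type*} [MeasurableSpace α] [MeasurableSpace G] [AddGroup G] [MeasurableAdd₂ G]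
  [MeasurableSub₂ G]

theorem map_prod_add_comp_prod_withDensity {μ : Measure α} [SFinite μ] {ν : Measure G} [SFinite ν]
    [ν.IsAddRightInvariant] {g : G → ℝ≥0∞} (hg : Measurable g) {h : α → G} (hh : Measurable h) :
    (μ.prod (ν.withDensity g)).map (fun p => (p.1, p.2 + h p.1)) =
      (μ.prod ν).withDensity (fun p => g (p.2 - h p.1)) := by
  refine ext_of_lintegral _ fun φ hφ => ?_
  rw [lintegral_map hφ (by fun_prop), prod_withDensity_right hg,
    lintegral_withDensity_eq_lintegral_mul _ (by fun_prop) (by fun_prop),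
    lintegral_withDensity_eq_lintegral_mul _ (by fun_prop) hφ,
    lintegral_prod _ (by fun_prop), lintegral_prod _ (by fun_prop)]
  refine lintegral_congr fun x => ?_
  simp only [Pi.mul_apply]
  rw [← lintegral_add_right_eq_self (fun y => g (y - h x) * φ (x, y)) (h x)]
  simp only [add_sub_cancel_right]

theorem map_add_prod_withDensity {β : Type*} [MeasurableSpace β] {μ : Measure G} [SFinite μ]
    [μ.IsAddRightInvariant] {f : G → ℝ≥0∞} (hf : Measurable f) {ν : Measure β} [SFinite ν]
    {s : β → G} (hs : Measurable s) :
    ((μ.withDensity f).prod ν).map (fun p => p.1 + s p.2) =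
      μ.withDensity (fun x => ∫⁻ y, f (x - s y) ∂ν) := by
  refine ext_of_lintegral _ fun φ hφ => ?_
  have hF : Measurable fun x => ∫⁻ y, f (x - s y) ∂ν :=
    Measurable.lintegral_prod_right' (f := fun p : G × β => f (p.1 - s p.2)) (by fun_prop)
  rw [lintegral_map hφ (by fun_prop), prod_withDensity_left hf,
    lintegral_withDensity_eq_lintegral_mul _ (by fun_prop) (by fun_prop),
    lintegral_withDensity_eq_lintegral_mul _ hF hφ, lintegral_prod_symm _ (by fun_prop)]
  calc ∫⁻ y, ∫⁻ x, f x * φ (x + s y) ∂μ ∂ν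
      = ∫⁻ y, ∫⁻ x, f (x - s y) * φ x ∂μ ∂ν := by
        refine lintegral_congr fun y => ?_
        rw [← lintegral_add_right_eq_self (fun x => f (x - s y) * φ x) (s y)]
        simp
    _ = ∫⁻ x, (∫⁻ y, f (x - s y) ∂ν) * φ x ∂μ := by
        rw [lintegral_lintegral_swap (by fun_prop)]
        refine lintegral_congr fun x => lintegral_mul_const _ ?_
        exact hf.comp (measurable_const.sub hs)

end MeasureTheory.Measure

theorem gaussDensity_eq_gaussianPDFReal {σ : ℝ} (hσ : 0 < σ) :
    gaussDensity σ = gaussianPDFReal 0 (.mk (σ ^ 2) (sq_nonneg σ)) := by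
  ext t
  simp only [gaussDensity, gaussianPDFReal, NNReal.coe_mk, sub_zero]
  rw [Real.sqrt_mul' _ (sq_nonneg σ), Real.sqrt_sq hσ.le]

theorem gaussDensity_neg (σ t : ℝ) : gaussDensity σ (-t) = gaussDensity σ t := by
  rw [gaussDensity, gaussDensity, neg_sq]

theorem gaussDensity_nonneg {σ : ℝ} (hσ : 0 < σ) (t : ℝ) : 0 ≤ gaussDensity σ t := by
  unfold gaussDensity; positivity

@[fun_prop]
theorem continuous_gaussDensity (σ : ℝ) : Continuous (gaussDensity σ) := by
  unfold gaussDensity; fun_prop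

theorem gaussDensity_one_eq_gaussianPDFReal : gaussDensity 1 = gaussianPDFReal 0 1 := by
  rw [gaussDensity_eq_gaussianPDFReal one_pos]
  congr
  simp

theorem gaussDensity_eq_inv_mul {σ : ℝ} (hσ : σ ≠ 0) (t : ℝ) :
    gaussDensity σ t = σ⁻¹ * gaussDensity 1 (t / σ) := by
  simp only [gaussDensity, mul_inv, one_pow, mul_one, div_pow]
  field_simp

theorem stdNormalCDF_eq_integral_gaussianPDFReal (t : ℝ) :
    stdNormalCDF t = ∫ z in Iic t, gaussianPDFReal 0 1 z := by
  simp [stdNormalCDF, gaussianPDFReal]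

theorem integral_gaussDensity {σ : ℝ} (hσ : 0 < σ) (a b : ℝ) :
    ∫ t in a..b, gaussDensity σ t = stdNormalCDF (b / σ) - stdNormalCDF (a / σ) := by
  have hint (t : ℝ) := (integrable_gaussianPDFReal 0 1).integrableOn (s := Iic t)
  rw [stdNormalCDF_eq_integral_gaussianPDFReal, stdNormalCDF_eq_integral_gaussianPDFReal,
    intervalIntegral.integral_Iic_sub_Iic (hint _) (hint _),
    intervalIntegral.integral_congr fun t _ => gaussDensity_eq_inv_mul hσ.ne' t,
    intervalIntegral.integral_const_mul, intervalIntegral.integral_comp_div _ hσ.ne',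
    gaussDensity_one_eq_gaussianPDFReal, smul_eq_mul, inv_mul_cancel_left₀ hσ.ne']

theorem integral_gaussDensity_two_mul_sub {σ : ℝ} (hσ : 0 < σ) (s a b : ℝ) :
    ∫ τ in a..b, gaussDensity σ (2 * τ - s) =
      (stdNormalCDF ((2 * b - s) / σ) - stdNormalCDF ((2 * a - s) / σ)) / 2 := by
  rw [intervalIntegral.integral_comp_mul_sub _ two_ne_zero, integral_gaussDensity hσ,
    smul_eq_mul, inv_mul_eq_div]

theorem map_const_mul_gaussianReal {σ : ℝ} (hσ : 0 < σ) :
    (gaussianReal 0 1).map (σ * ·) = volume.withDensity (fun x => .ofReal (gaussDensity σ x)) := by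
  rw [gaussianReal_map_const_mul, mul_zero, mul_one,
    gaussianReal_of_var_ne_zero _ (by simpa [← NNReal.coe_ne_zero] using hσ.ne'),
    gaussDensity_eq_gaussianPDFReal hσ]
  rfl

theorem gaussDensity_mul_gaussDensity_sub_mul {γ ρ : ℝ} (hγ : 0 < γ) (hρ : ρ ∈ Ioo (-1 : ℝ) 1)
    (a b : ℝ) :
    gaussDensity γ a * gaussDensity (γ * √(1 - ρ ^ 2)) (b - ρ * a) =
      2 * gaussDensity (√(2 * (1 - ρ)) * γ) (a - b) *
        gaussDensity (γ * √(2 * (1 + ρ))) (a + b) := by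
  obtain ⟨hρ₁, hρ₂⟩ := hρ
  have h₁ : 0 < 1 - ρ := by linarith
  have h₂ : 0 < 1 + ρ := by linarith
  have hc : 0 < 1 - ρ ^ 2 := by nlinarith
  have hsq : √(2 * (1 - ρ)) * √(2 * (1 + ρ)) = 2 * √(1 - ρ ^ 2) := by
    rw [← Real.sqrt_mul (by positivity), show 2 * (1 - ρ) * (2 * (1 + ρ)) = 2 ^ 2 * (1 - ρ ^ 2) by
      ring, Real.sqrt_mul (by positivity), Real.sqrt_sq zero_le_two]
  simp only [gaussDensity, mul_pow, Real.sq_sqrt hc.le,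
    Real.sq_sqrt (by positivity : (0:ℝ) ≤ 2 * (1 - ρ)),
    Real.sq_sqrt (by positivity : (0:ℝ) ≤ 2 * (1 + ρ))]
  have hexp : -a ^ 2 / (2 * γ ^ 2) + -(b - ρ * a) ^ 2 / (2 * (γ ^ 2 * (1 - ρ ^ 2))) =
      -(a - b) ^ 2 / (2 * (2 * (1 - ρ) * γ ^ 2)) +
        -(a + b) ^ 2 / (2 * (γ ^ 2 * (2 * (1 + ρ)))) := by
    field_simp
    ring
  calc _ = ((√(2 * π)) ^ 2 * γ ^ 2 * √(1 - ρ ^ 2))⁻¹ *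
        rexp (-a ^ 2 / (2 * γ ^ 2) + -(b - ρ * a) ^ 2 / (2 * (γ ^ 2 * (1 - ρ ^ 2)))) := by
        rw [exp_add]; ring
    _ = 2 * ((√(2 * π)) ^ 2 * γ ^ 2 * (√(2 * (1 - ρ)) * √(2 * (1 + ρ))))⁻¹ *
        rexp (-(a - b) ^ 2 / (2 * (2 * (1 - ρ) * γ ^ 2)) +
          -(a + b) ^ 2 / (2 * (γ ^ 2 * (2 * (1 + ρ))))) := by
        rw [hexp, hsq]; ring
    _ = _ := by rw [exp_add]; ring

instance : IsProbabilityMeasure uniform02pi where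
  measure_univ := by
    rw [uniform02pi, Measure.smul_apply, Measure.restrict_apply_univ, Real.volume_Ioo, sub_zero,
      smul_eq_mul, ENNReal.inv_mul_cancel (by simp [Real.pi_pos]) ENNReal.ofReal_ne_top]

theorem map_gaussianReal_prod_shear {a d : ℝ} (ha : 0 < a) (hd : 0 < d) (r : ℝ) :
    ((gaussianReal 0 1).prod (gaussianReal 0 1)).map
        (fun p => (a * p.1, r * (a * p.1) + d * p.2)) =
      volume.withDensity
        (fun q => .ofReal (gaussDensity a q.1) * .ofReal (gaussDensity d (q.2 - r * q.1))) := by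
  have hsplit : (fun p : ℝ × ℝ => (a * p.1, r * (a * p.1) + d * p.2)) =
      (fun p => (p.1, p.2 + r * p.1)) ∘ Prod.map (a * ·) (d * ·) := by
    ext p <;> simp [add_comm]
  rw [hsplit, ← Measure.map_map (by fun_prop) (by fun_prop),
    ← Measure.map_prod_map _ _ (by fun_prop) (by fun_prop), map_const_mul_gaussianReal ha,
    map_const_mul_gaussianReal hd,
    Measure.map_prod_add_comp_prod_withDensity (by fun_prop) (by fun_prop),
    prod_withDensity_left (by fun_prop), ← withDensity_mul _
      (by fun_prop : Measurable fun q : ℝ × ℝ => ENNReal.ofReal (gaussDensity a q.1))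
      (by fun_prop : Measurable fun q : ℝ × ℝ => ENNReal.ofReal (gaussDensity d (q.2 - r * q.1))),
    Measure.volume_eq_prod]
  rfl

theorem lintegral_uniform02pi_gaussDensity {γ ρ : ℝ} (hγ : 0 < γ) (hρ : ρ ∈ Ioo (-1 : ℝ) 1)
    (x y : ℝ) :
    ∫⁻ τ, .ofReal (gaussDensity γ (x - τ)) *
        .ofReal (gaussDensity (γ * √(1 - ρ ^ 2)) (y - τ - ρ * (x - τ))) ∂uniform02pi =
      .ofReal ((2 * π)⁻¹ * gaussDensity (√(2 * (1 - ρ)) * γ) (x - y) *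
        (stdNormalCDF ((4 * π - (x + y)) / (γ * √(2 * (1 + ρ)))) -
          stdNormalCDF (-(x + y) / (γ * √(2 * (1 + ρ)))))) := by
  have hσ₁ : 0 < √(2 * (1 - ρ)) * γ := by have := sub_pos.2 hρ.2; positivity
  have hσ₂ : 0 < γ * √(2 * (1 + ρ)) := by have := neg_lt_iff_pos_add'.1 hρ.1; positivity
  set G := gaussDensity (√(2 * (1 - ρ)) * γ) (x - y)
  have hG : 0 ≤ G := gaussDensity_nonneg hσ₁ _
  have hpoint : ∀ τ, ENNReal.ofReal (gaussDensity γ (x - τ)) *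
      .ofReal (gaussDensity (γ * √(1 - ρ ^ 2)) (y - τ - ρ * (x - τ))) =
      .ofReal (2 * G * gaussDensity (γ * √(2 * (1 + ρ))) (2 * τ - (x + y))) := fun τ => by
    rw [← ENNReal.ofReal_mul (gaussDensity_nonneg hγ _),
      gaussDensity_mul_gaussDensity_sub_mul hγ hρ, show x - τ - (y - τ) = x - y by ring,
      show x - τ + (y - τ) = -(2 * τ - (x + y)) by ring, gaussDensity_neg]
  have hint : IntegrableOn (fun τ => 2 * G * gaussDensity (γ * √(2 * (1 + ρ))) (2 * τ - (x + y)))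
      (Ioo 0 (2 * π)) :=
    (Continuous.integrableOn_Icc (by fun_prop)).mono_set Ioo_subset_Icc_self
  rw [uniform02pi, lintegral_smul_measure, lintegral_congr hpoint,
    ← ofReal_integral_eq_lintegral_ofReal hint
      (.of_forall fun τ => by have := gaussDensity_nonneg hσ₂ (2 * τ - (x + y)); positivity),
    integral_const_mul, ← integral_Ioc_eq_integral_Ioo,
    ← intervalIntegral.integral_of_le (by positivity), integral_gaussDensity_two_mul_sub hσ₂,
    ← ENNReal.ofReal_inv_of_pos (by positivity), smul_eq_mul, ← ENNReal.ofReal_mul (by positivity)]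
  congr 1
  ring_nf

/-- the joint density of (z_x, z_y) = (γX + τ, γY + τ), where (X,Y) is
bivariate standard normal with correlation ρ (realized via Y = ρX + √(1−ρ²)Z) and
τ ~ Uniform(0,2π) independent. -/
theorem stmt6 (γ ρ : ℝ) (hγ : 0 < γ) (hρ : ρ ∈ Set.Ioo (-1 : ℝ) 1) :
    Measure.map (fun p : (ℝ × ℝ) × ℝ =>
        (γ * p.1.1 + p.2,
         γ * (ρ * p.1.1 + Real.sqrt (1 - ρ ^ 2) * p.1.2) + p.2))
      (((gaussianReal 0 1).prod (gaussianReal 0 1)).prod uniform02pi) =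
    (volume : Measure (ℝ × ℝ)).withDensity (fun q =>
      ENNReal.ofReal ((2 * π)⁻¹ *
        gaussDensity (Real.sqrt (2 * (1 - ρ)) * γ) (q.1 - q.2) *
        (stdNormalCDF ((4 * π - (q.1 + q.2)) / (γ * Real.sqrt (2 * (1 + ρ)))) -
         stdNormalCDF (-(q.1 + q.2) / (γ * Real.sqrt (2 * (1 + ρ))))))) := by
  have hc : 0 < 1 - ρ ^ 2 := by nlinarith [hρ.1, hρ.2]
  have hγc : 0 < γ * √(1 - ρ ^ 2) := by positivity
  have hA : Measurable fun p : ℝ × ℝ => (γ * p.1, ρ * (γ * p.1) + γ * √(1 - ρ ^ 2) * p.2) := by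
    fun_prop
  have hsplit : (fun p : (ℝ × ℝ) × ℝ =>
      (γ * p.1.1 + p.2, γ * (ρ * p.1.1 + √(1 - ρ ^ 2) * p.1.2) + p.2)) =
      (fun p => p.1 + (p.2, p.2)) ∘
        Prod.map (fun p : ℝ × ℝ => (γ * p.1, ρ * (γ * p.1) + γ * √(1 - ρ ^ 2) * p.2)) id := by
    ext p <;> simp [mul_add, mul_assoc, mul_left_comm]
  rw [hsplit, ← Measure.map_map (by fun_prop) (hA.prodMap measurable_id),
    ← Measure.map_prod_map _ _ hA measurable_id, Measure.map_id,
    map_gaussianReal_prod_shear hγ hγc,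
    Measure.map_add_prod_withDensity (s := fun t : ℝ => (t, t)) (by fun_prop) (by fun_prop)]
  congr 1
  ext q
  simpa using lintegral_uniform02pi_gaussDensity hγ hρ q.1 q.2
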